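/- arXiv:2503.19618 — 2 statements merged into one kernel-verified Lean document; each statement's English description precedes it below -/
import Mathlib

section
/- Variance reduction: the variance of the variance-reduced policy-gradient estimate under the chain marginal is at most the variance of the vanilla policy-gradient estimate under the joint distribution: Var_Q(g_vr) ≤ Var_P(g_pg). -/
/-!
The variance-reduced estimate is the conditional expectation of the vanilla one given the chains:
averaging the answers out of the `i`-th summand keeps the chain score `sc cᵢ`, replaces each
indicator `1[aⱼ = a*]` by its mean `κ θ₀ cⱼ a*` (the answers are independent given the chains), and
turns `sa cᵢ aᵢ · 1[aᵢ = a*]` into `κ θ₀ cᵢ a* · sa cᵢ a* = ∂κ(cᵢ, a*)`, while the answer score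
has mean zero. Rao–Blackwell then finishes: the means agree, and by Jensen the squared
conditional expectation is at most the conditional second moment.
-/

open Finset

section WeightedVariance

variable {α β : Type*} [Fintype α] [Fintype β]

noncomputable def weightedVariance (μ f : α → ℝ) : ℝ :=
  ∑ x, μ x * f x ^ 2 - (∑ x, μ x * f x) ^ 2

lemma weightedVariance_comp_equiv (e : β ≃ α) (μ f : α → ℝ) :
    weightedVariance (μ ∘ e) (f ∘ e) = weightedVariance μ f := by
  simp only [weightedVariance, Function.comp_apply, e.sum_comp (fun x => μ x * f x ^ 2),
    e.sum_comp (fun x => μ x * f x)]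

lemma sq_sum_mul_le_sum_mul_sq {w : β → ℝ} (hw : ∀ b, 0 ≤ w b) (hw1 : ∑ b, w b = 1)
    (g : β → ℝ) : (∑ b, w b * g b) ^ 2 ≤ ∑ b, w b * g b ^ 2 := by
  simpa [hw1] using sum_sq_le_sum_mul_sum_of_sq_le_mul univ (fun b _ => hw b)
    (fun b _ => mul_nonneg (hw b) (sq_nonneg (g b)))
    (fun b _ => (by ring : (w b * g b) ^ 2 = w b * (w b * g b ^ 2)).le)

theorem weightedVariance_condExp_le {Q : α → ℝ} {K : α → β → ℝ} (hQ : ∀ a, 0 ≤ Q a)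
    (hK : ∀ a b, 0 ≤ K a b) (hK1 : ∀ a, ∑ b, K a b = 1) (g : α × β → ℝ) :
    weightedVariance Q (fun a => ∑ b, K a b * g (a, b)) ≤
      weightedVariance (fun x => Q x.1 * K x.1 x.2) g := by
  have hsplit : ∀ h : α × β → ℝ,
      ∑ x, Q x.1 * K x.1 x.2 * h x = ∑ a, Q a * ∑ b, K a b * h (a, b) := by
    intro h
    simp_rw [Fintype.sum_prod_type, mul_sum, mul_assoc]
  rw [weightedVariance, weightedVariance, hsplit, hsplit g]
  gcongr with a
  · exact hQ a
  · exact sq_sum_mul_le_sum_mul_sq (hK a) (hK1 a) _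

end WeightedVariance

section ProductWeights

variable {ι α : Type*} [Fintype ι] [DecidableEq ι] [Fintype α] (p : ι → α → ℝ)

lemma sum_prod_mul_prod_apply (hp : ∀ k, ∑ x, p k x = 1) (s : Finset ι) (φ : ι → α → ℝ) :
    ∑ a : ι → α, (∏ k, p k (a k)) * ∏ k ∈ s, φ k (a k) = ∏ k ∈ s, ∑ x, p k x * φ k x := by
  have hfactor : ∀ a : ι → α, (∏ k, p k (a k)) * ∏ k ∈ s, φ k (a k) =
      ∏ k, p k (a k) * (if k ∈ s then φ k (a k) else 1) := by
    intro a
    rw [prod_mul_distrib, prod_ite_mem, univ_inter]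
  have hfiber : ∀ k, ∑ x, p k x * (if k ∈ s then φ k x else 1) =
      if k ∈ s then ∑ x, p k x * φ k x else 1 := by
    intro k
    split_ifs <;> simp [hp]
  simp_rw [hfactor]
  rw [← Fintype.prod_sum (fun k x => p k x * if k ∈ s then φ k x else 1)]
  simp_rw [hfiber]
  rw [prod_ite_mem, univ_inter]

lemma sum_prod_mul_apply (hp : ∀ k, ∑ x, p k x = 1) (i : ι) (f : α → ℝ) :
    ∑ a : ι → α, (∏ k, p k (a k)) * f (a i) = ∑ x, p i x * f x := by
  simpa using sum_prod_mul_prod_apply p hp {i} (fun _ => f)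

lemma sum_prod_mul_apply_mul_apply (hp : ∀ k, ∑ x, p k x = 1) {i j : ι} (hij : i ≠ j)
    (f g : α → ℝ) :
    ∑ a : ι → α, (∏ k, p k (a k)) * (f (a i) * g (a j)) =
      (∑ x, p i x * f x) * ∑ x, p j x * g x := by
  simpa [prod_pair hij, hij.symm] using
    sum_prod_mul_prod_apply p hp {i, j} (fun k => if k = i then f else g)

lemma sum_prod_mul_leaveOneOut (hp : ∀ k, ∑ x, p k x = 1) (i : ι) (t u : α → ℝ) (r : ℝ) :
    ∑ a : ι → α, (∏ k, p k (a k)) * (t (a i) * (u (a i) - r * ∑ j ∈ univ.erase i, u (a j))) =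
      ∑ x, p i x * (t x * u x) -
        r * ((∑ x, p i x * t x) * ∑ j ∈ univ.erase i, ∑ x, p j x * u x) := by
  have hexpand : ∀ a : ι → α,
      (∏ k, p k (a k)) * (t (a i) * (u (a i) - r * ∑ j ∈ univ.erase i, u (a j))) =
        (∏ k, p k (a k)) * (t (a i) * u (a i)) -
          r * ∑ j ∈ univ.erase i, (∏ k, p k (a k)) * (t (a i) * u (a j)) := by
    intro a
    simp only [← mul_sum]
    ring
  simp_rw [hexpand]
  rw [sum_sub_distrib, ← mul_sum, sum_comm, sum_prod_mul_apply p hp i (fun x => t x * u x),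
    sum_congr rfl fun j hj => sum_prod_mul_apply_mul_apply p hp (ne_of_mem_erase hj).symm t u,
    ← mul_sum]

end ProductWeights

section Score

lemma mul_deriv_log_eq_deriv {f : ℝ → ℝ} {x : ℝ} (hf : DifferentiableAt ℝ f x) (hx : f x ≠ 0) :
    f x * deriv (fun θ => Real.log (f θ)) x = deriv f x := by
  rw [deriv.log hf hx, mul_div_cancel₀ _ hx]

variable {A : Type*} [Fintype A] {f : ℝ → A → ℝ} {x : ℝ}

lemma sum_deriv_eq_zero_of_sum_eq_one (hf : ∀ a, DifferentiableAt ℝ (fun θ => f θ a) x)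
    (h1 : ∀ θ, ∑ a, f θ a = 1) : ∑ a, deriv (fun θ => f θ a) x = 0 := by
  rw [← deriv_fun_sum fun a _ => hf a]
  simp [h1]

lemma sum_mul_deriv_log_eq_zero (hf : ∀ a, DifferentiableAt ℝ (fun θ => f θ a) x)
    (hpos : ∀ a, 0 < f x a) (h1 : ∀ θ, ∑ a, f θ a = 1) :
    ∑ a, f x a * deriv (fun θ => Real.log (f θ a)) x = 0 := by
  simp_rw [fun a => mul_deriv_log_eq_deriv (hf a) (hpos a).ne']
  exact sum_deriv_eq_zero_of_sum_eq_one hf h1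

end Score

lemma sum_prod_mul_score_mul_leaveOneOut {ι C A : Type*} [Fintype ι] [DecidableEq ι]
    [Fintype A] [DecidableEq A] {κ : ℝ → C → A → ℝ} {θ₀ : ℝ}
    (hκ1 : ∀ θ c, ∑ a, κ θ c a = 1) (hκpos : ∀ c a, 0 < κ θ₀ c a)
    (hκdiff : ∀ c a, DifferentiableAt ℝ (fun θ => κ θ c a) θ₀)
    (astar : A) (c : ι → C) (i : ι) (s r : ℝ) :
    ∑ a : ι → A, (∏ k, κ θ₀ (c k) (a k)) *
        ((s + deriv (fun θ => Real.log (κ θ (c i) (a i))) θ₀) *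
          ((if a i = astar then 1 else 0) -
            r * ∑ j ∈ univ.erase i, (if a j = astar then 1 else 0))) =
      s * (κ θ₀ (c i) astar - r * ∑ j ∈ univ.erase i, κ θ₀ (c j) astar) +
        deriv (fun θ => κ θ (c i) astar) θ₀ := by
  rw [sum_prod_mul_leaveOneOut (fun k => κ θ₀ (c k)) (fun k => hκ1 θ₀ (c k)) i
    (fun x => s + deriv (fun θ => Real.log (κ θ (c i) x)) θ₀)
    (fun x => if x = astar then (1 : ℝ) else 0) r]
  have hmean : ∑ x, κ θ₀ (c i) x * (s + deriv (fun θ => Real.log (κ θ (c i) x)) θ₀) = s := by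
    simp only [mul_add, sum_add_distrib, ← sum_mul, hκ1,
      sum_mul_deriv_log_eq_zero (hκdiff (c i)) (hκpos (c i)) (fun θ => hκ1 θ (c i))]
    ring
  simp only [hmean, mul_ite, mul_one, mul_zero, sum_ite_eq', mem_univ, if_true]
  rw [mul_add, mul_deriv_log_eq_deriv (hκdiff (c i) astar) (hκpos (c i) astar).ne']
  ring

theorem variance_reduction_of_var_reduced_pg_general
    {C A : Type*} [Fintype C] [Fintype A] [DecidableEq A]
    (θ₀ : ℝ) (astar : A)
    (π : ℝ → C → ℝ) (κ : ℝ → C → A → ℝ)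
    (hκ1 : ∀ θ c, ∑ a, κ θ c a = 1)
    (hπpos : ∀ c, 0 < π θ₀ c) (hκpos : ∀ c a, 0 < κ θ₀ c a)
    (hκdiff : ∀ c a, DifferentiableAt ℝ (fun θ => κ θ c a) θ₀)
    (n : ℕ)
    (gpg : (Fin n → C × A) → ℝ)
    (hgpg : ∀ y, gpg y =
      (1 / (n : ℝ)) *
        ∑ i,
          (deriv (fun θ => Real.log (π θ (y i).1)) θ₀ +
              deriv (fun θ => Real.log (κ θ (y i).1 (y i).2)) θ₀) *
            ((if (y i).2 = astar then (1 : ℝ) else 0) -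
              (1 / ((n : ℝ) - 1)) *
                ∑ j ∈ Finset.univ.erase i, (if (y j).2 = astar then (1 : ℝ) else 0)))
    (gvr : (Fin n → C) → ℝ)
    (hgvr : ∀ c, gvr c =
      (1 / (n : ℝ)) *
        ∑ i,
          (deriv (fun θ => Real.log (π θ (c i))) θ₀ *
              (κ θ₀ (c i) astar -
                (1 / ((n : ℝ) - 1)) * ∑ j ∈ Finset.univ.erase i, κ θ₀ (c j) astar) +
            deriv (fun θ => κ θ (c i) astar) θ₀))
    (P : (Fin n → C × A) → ℝ)
    (hP : ∀ y, P y = ∏ i, (π θ₀ (y i).1 * κ θ₀ (y i).1 (y i).2))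
    (Q : (Fin n → C) → ℝ)
    (hQ : ∀ c, Q c = ∏ i, π θ₀ (c i)) :
    (∑ c : Fin n → C, Q c * (gvr c) ^ 2) - (∑ c : Fin n → C, Q c * gvr c) ^ 2 ≤
      (∑ y : Fin n → C × A, P y * (gpg y) ^ 2) - (∑ y : Fin n → C × A, P y * gpg y) ^ 2 := by
  let K : (Fin n → C) → (Fin n → A) → ℝ := fun c a => ∏ k, κ θ₀ (c k) (a k)
  let e := Equiv.arrowProdEquivProdArrow (Fin n) (fun _ => C) (fun _ => A)
  have hvr : ∀ c, gvr c = ∑ a, K c a * gpg (e.symm (c, a)) := by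
    intro c
    simp_rw [hgvr, hgpg, mul_sum univ, mul_left_comm (K c _) (1 / (n : ℝ))]
    rw [sum_comm]
    refine sum_congr rfl fun i _ => ?_
    rw [← mul_sum]
    exact congrArg _ (sum_prod_mul_score_mul_leaveOneOut hκ1 hκpos hκdiff astar c i _ _).symm
  have hPQ : P = (fun x => Q x.1 * K x.1 x.2) ∘ e := by
    funext y
    simp [hP, hQ, K, e, prod_mul_distrib]
  have hQ0 : ∀ c, 0 ≤ Q c := fun c => (hQ c).symm ▸ prod_nonneg fun k _ => (hπpos (c k)).le
  have hK1 : ∀ c, ∑ a, K c a = 1 := fun c => by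
    rw [← Fintype.prod_sum (fun k x => κ θ₀ (c k) x)]
    simp [hκ1]
  calc weightedVariance Q gvr
        = weightedVariance Q (fun c => ∑ a, K c a * gpg (e.symm (c, a))) := by
          rw [← funext hvr]
      _ ≤ weightedVariance (fun x => Q x.1 * K x.1 x.2) (gpg ∘ e.symm) :=
          weightedVariance_condExp_le hQ0
            (fun c a => prod_nonneg fun k _ => (hκpos (c k) (a k)).le) hK1 (gpg ∘ e.symm)
      _ = weightedVariance P gpg := by
          rw [hPQ, ← weightedVariance_comp_equiv e]
          rfl

/-- Variance reduction: the variance of the variance-reduced policy-gradient estimate under the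
chain marginal `Q` is at most the variance of the vanilla policy-gradient estimate under the
joint distribution `P`: `Var_Q(g_vr) ≤ Var_P(g_pg)`, where
`Var_μ(f) = ∑ x, μ x * (f x)² − (∑ x, μ x * f x)²`. -/
theorem variance_reduction_of_var_reduced_pg
    {C A : Type*} [Fintype C] [Fintype A] [Nonempty C] [Nonempty A] [DecidableEq A]
    (θ₀ : ℝ) (astar : A)
    (π : ℝ → C → ℝ) (κ : ℝ → C → A → ℝ)
    (hπ0 : ∀ θ c, 0 ≤ π θ c) (hπ1 : ∀ θ, ∑ c, π θ c = 1)
    (hκ0 : ∀ θ c a, 0 ≤ κ θ c a) (hκ1 : ∀ θ c, ∑ a, κ θ c a = 1)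
    (hπpos : ∀ c, 0 < π θ₀ c) (hκpos : ∀ c a, 0 < κ θ₀ c a)
    (hπdiff : ∀ c, DifferentiableAt ℝ (fun θ => π θ c) θ₀)
    (hκdiff : ∀ c a, DifferentiableAt ℝ (fun θ => κ θ c a) θ₀)
    (n : ℕ) (hn : 2 ≤ n)
    (gpg : (Fin n → C × A) → ℝ)
    (hgpg : ∀ y, gpg y =
      (1 / (n : ℝ)) *
        ∑ i,
          (deriv (fun θ => Real.log (π θ (y i).1)) θ₀ +
              deriv (fun θ => Real.log (κ θ (y i).1 (y i).2)) θ₀) *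
            ((if (y i).2 = astar then (1 : ℝ) else 0) -
              (1 / ((n : ℝ) - 1)) *
                ∑ j ∈ Finset.univ.erase i, (if (y j).2 = astar then (1 : ℝ) else 0)))
    (gvr : (Fin n → C) → ℝ)
    (hgvr : ∀ c, gvr c =
      (1 / (n : ℝ)) *
        ∑ i,
          (deriv (fun θ => Real.log (π θ (c i))) θ₀ *
              (κ θ₀ (c i) astar -
                (1 / ((n : ℝ) - 1)) * ∑ j ∈ Finset.univ.erase i, κ θ₀ (c j) astar) +
            deriv (fun θ => κ θ (c i) astar) θ₀))
    (P : (Fin n → C × A) → ℝ)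
    (hP : ∀ y, P y = ∏ i, (π θ₀ (y i).1 * κ θ₀ (y i).1 (y i).2))
    (Q : (Fin n → C) → ℝ)
    (hQ : ∀ c, Q c = ∏ i, π θ₀ (c i)) :
    (∑ c : Fin n → C, Q c * (gvr c) ^ 2) - (∑ c : Fin n → C, Q c * gvr c) ^ 2 ≤
      (∑ y : Fin n → C × A, P y * (gpg y) ^ 2) - (∑ y : Fin n → C × A, P y * gpg y) ^ 2 :=
  variance_reduction_of_var_reduced_pg_general θ₀ astar π κ hκ1 hπpos hκpos hκdiff n gpg hgpg gvr
    hgvr P hP Q hQ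
end

section
/- Leave-one-out control variates introduce no bias: ∑_{(c_1,…,c_n) ∈ C^n} (∏_{i=1}^n π θ₀ c_i) * [ (1/n) * ∑_{i=1}^n ( (log (κ θ₀ c_i a*) − v_i) * sc c_i + sa c_i a* ) ] = ∑_c π θ₀ c * ( log (κ θ₀ c a*) * sc c + sa c a* ), where v_i = (1/(n−1)) * ∑_{j ≠ i} log (κ θ₀ c_j a*). -/
/-!
Under the product weights `∏ j, π θ₀ (cs j)` the samples are independent, so for `j ≠ i` the
baseline term `log κ(c_j) · sc(c_i)` has expectation `E[log κ] · E[sc]`, and the score has mean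
zero: `∑ c, π θ₀ c · sc c = ∑ c, π' c = (∑ c, π c)' = 0`. Hence every summand `i` of the
estimator has the expectation of the single-sample estimator, whatever the coefficient of the
baseline, and so does their average.
-/

open Finset

section ProductWeights

variable {ι C R : Type*} [Fintype ι] [DecidableEq ι] [Fintype C] [CommSemiring R]
  {p : C → R}

theorem sum_prod_mul_prod_eq_prod_sum (hp : ∑ c, p c = 1) (s : Finset ι) (f : ι → C → R) :
    ∑ cs : ι → C, (∏ j, p (cs j)) * ∏ j ∈ s, f j (cs j) = ∏ j ∈ s, ∑ c, p c * f j c := by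
  let f' : ι → C → R := fun j c => p c * if j ∈ s then f j c else 1
  have hlhs (cs : ι → C) : (∏ j, p (cs j)) * ∏ j ∈ s, f j (cs j) = ∏ j, f' j (cs j) := by
    rw [prod_mul_distrib, prod_ite_mem, univ_inter]
  have hrhs (j : ι) : ∑ c, f' j c = if j ∈ s then ∑ c, p c * f j c else 1 := by
    split_ifs <;> simp [f', *]
  simp_rw [hlhs, ← Fintype.prod_sum, hrhs, prod_ite_mem, univ_inter]

theorem sum_prod_mul_apply_s17 (hp : ∑ c, p c = 1) (i : ι) (F : C → R) :
    ∑ cs : ι → C, (∏ j, p (cs j)) * F (cs i) = ∑ c, p c * F c := by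
  simpa using sum_prod_mul_prod_eq_prod_sum hp {i} fun _ => F

theorem sum_prod_mul_apply_mul_apply_s17 (hp : ∑ c, p c = 1) {i k : ι} (hik : i ≠ k)
    (F G : C → R) :
    ∑ cs : ι → C, (∏ j, p (cs j)) * (F (cs i) * G (cs k)) =
      (∑ c, p c * F c) * ∑ c, p c * G c := by
  simpa [prod_pair hik, hik.symm] using
    sum_prod_mul_prod_eq_prod_sum hp {i, k} fun j => if j = i then F else G

end ProductWeights

theorem sum_mul_deriv_log_eq_zero_s17 {ι : Type*} [Fintype ι] {p : ℝ → ι → ℝ} {θ₀ : ℝ}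
    (hp : ∀ θ, ∑ c, p θ c = 1) (hp₀ : ∀ c, p θ₀ c ≠ 0)
    (hdiff : ∀ c, DifferentiableAt ℝ (fun θ => p θ c) θ₀) :
    ∑ c, p θ₀ c * deriv (fun θ => Real.log (p θ c)) θ₀ = 0 := by
  calc ∑ c, p θ₀ c * deriv (fun θ => Real.log (p θ c)) θ₀
      = ∑ c, deriv (fun θ => p θ c) θ₀ := by
        refine sum_congr rfl fun c _ => ?_
        rw [deriv.log (hdiff c) (hp₀ c), mul_div_cancel₀ _ (hp₀ c)]
    _ = deriv (fun θ => ∑ c, p θ c) θ₀ := (deriv_fun_sum fun c _ => hdiff c).symm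
    _ = 0 := by simp [hp]

section LeaveOneOut

variable {C : Type*} [Fintype C] {p g : C → ℝ}

theorem sum_prod_mul_sub_baseline {ι : Type*} [Fintype ι] [DecidableEq ι]
    (hp : ∑ c, p c = 1) (hg : ∑ c, p c * g c = 0) (ℓ s : C → ℝ) (b : ℝ) (i : ι) :
    ∑ cs : ι → C, (∏ j, p (cs j)) *
        ((ℓ (cs i) - b * ∑ j ∈ univ.erase i, ℓ (cs j)) * g (cs i) + s (cs i)) =
      ∑ c, p c * (ℓ c * g c + s c) := by
  have hbaseline (j : ι) (hj : j ∈ univ.erase i) :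
      ∑ cs : ι → C, (∏ j, p (cs j)) * (ℓ (cs j) * g (cs i)) = 0 := by
    rw [sum_prod_mul_apply_mul_apply_s17 hp (ne_of_mem_erase hj), hg, mul_zero]
  calc ∑ cs : ι → C, (∏ j, p (cs j)) *
          ((ℓ (cs i) - b * ∑ j ∈ univ.erase i, ℓ (cs j)) * g (cs i) + s (cs i))
      = ∑ cs : ι → C, (∏ j, p (cs j)) * (ℓ (cs i) * g (cs i) + s (cs i)) -
          b * ∑ j ∈ univ.erase i, ∑ cs : ι → C, (∏ j, p (cs j)) * (ℓ (cs j) * g (cs i)) := by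
        rw [← sum_comm, mul_sum, ← sum_sub_distrib]
        refine sum_congr rfl fun cs _ => ?_
        rw [← mul_sum, ← sum_mul]
        ring
    _ = ∑ c, p c * (ℓ c * g c + s c) := by
        rw [sum_congr rfl hbaseline, sum_const_zero, mul_zero, sub_zero,
          sum_prod_mul_apply_s17 hp i fun c => ℓ c * g c + s c]

theorem sum_mul_one_div_mul_sum {α : Type*} [Fintype α] {n : ℕ} (hn : n ≠ 0) (w : α → ℝ)
    (T : Fin n → α → ℝ) {E : ℝ} (hT : ∀ i, ∑ a, w a * T i a = E) :
    ∑ a, w a * ((1 / (n : ℝ)) * ∑ i, T i a) = E := by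
  simp only [mul_sum, mul_left_comm (w _)]
  rw [sum_comm]
  simp only [← mul_sum, hT, sum_const, card_univ, Fintype.card_fin, nsmul_eq_mul]
  field_simp

theorem sum_prod_mul_leaveOneOut_s17 {n : ℕ} (hn : n ≠ 0)
    (hp : ∑ c, p c = 1) (hg : ∑ c, p c * g c = 0) (ℓ s : C → ℝ) (b : ℝ) :
    ∑ cs : Fin n → C, (∏ i, p (cs i)) *
        ((1 / (n : ℝ)) *
          ∑ i, ((ℓ (cs i) - b * ∑ j ∈ univ.erase i, ℓ (cs j)) * g (cs i) + s (cs i))) =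
      ∑ c, p c * (ℓ c * g c + s c) :=
  sum_mul_one_div_mul_sum hn (fun cs : Fin n → C => ∏ i, p (cs i))
    (fun i (cs : Fin n → C) =>
      (ℓ (cs i) - b * ∑ j ∈ univ.erase i, ℓ (cs j)) * g (cs i) + s (cs i))
    (sum_prod_mul_sub_baseline hp hg ℓ s b)

end LeaveOneOut

theorem leave_one_out_control_variate_unbiased_general
    {C A : Type*} [Fintype C]
    (θ₀ : ℝ) (astar : A)
    (π : ℝ → C → ℝ) (κ : ℝ → C → A → ℝ)
    (hπ1 : ∀ θ, ∑ c, π θ c = 1)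
    (hπpos : ∀ c, 0 < π θ₀ c)
    (hπdiff : ∀ c, DifferentiableAt ℝ (fun θ => π θ c) θ₀)
    (n : ℕ) (hn : 2 ≤ n) :
    ∑ cs : Fin n → C,
        (∏ i, π θ₀ (cs i)) *
          ((1 / (n : ℝ)) *
            ∑ i,
              ((Real.log (κ θ₀ (cs i) astar) -
                    (1 / ((n : ℝ) - 1)) *
                      ∑ j ∈ Finset.univ.erase i, Real.log (κ θ₀ (cs j) astar)) *
                  deriv (fun θ => Real.log (π θ (cs i))) θ₀ +
                deriv (fun θ => Real.log (κ θ (cs i) astar)) θ₀)) =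
      ∑ c, π θ₀ c *
        (Real.log (κ θ₀ c astar) * deriv (fun θ => Real.log (π θ c)) θ₀ +
          deriv (fun θ => Real.log (κ θ c astar)) θ₀) :=
  sum_prod_mul_leaveOneOut_s17 (by omega) (hπ1 θ₀)
    (sum_mul_deriv_log_eq_zero_s17 hπ1 (fun c => (hπpos c).ne') hπdiff)
    (fun c => Real.log (κ θ₀ c astar)) (fun c => deriv (fun θ => Real.log (κ θ c astar)) θ₀) _

/-- Leave-one-out control variates introduce no bias: the expectation of the control-variated
single-sample gradient estimate over `n` i.i.d. chain-of-thoughts equals the expected gradient,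
where `v i = (1/(n-1)) * ∑_{j ≠ i} log (κ θ₀ cⱼ a*)`,
`sc c = deriv (fun θ => log (π θ c)) θ₀` and `sa c a = deriv (fun θ => log (κ θ c a)) θ₀`. -/
theorem leave_one_out_control_variate_unbiased
    {C A : Type*} [Fintype C] [Fintype A] [Nonempty C] [Nonempty A]
    (θ₀ : ℝ) (astar : A)
    (π : ℝ → C → ℝ) (κ : ℝ → C → A → ℝ)
    (hπ0 : ∀ θ c, 0 ≤ π θ c) (hπ1 : ∀ θ, ∑ c, π θ c = 1)
    (hκ0 : ∀ θ c a, 0 ≤ κ θ c a) (hκ1 : ∀ θ c, ∑ a, κ θ c a = 1)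
    (hπpos : ∀ c, 0 < π θ₀ c) (hκpos : ∀ c a, 0 < κ θ₀ c a)
    (hπdiff : ∀ c, DifferentiableAt ℝ (fun θ => π θ c) θ₀)
    (hκdiff : ∀ c a, DifferentiableAt ℝ (fun θ => κ θ c a) θ₀)
    (n : ℕ) (hn : 2 ≤ n) :
    ∑ cs : Fin n → C,
        (∏ i, π θ₀ (cs i)) *
          ((1 / (n : ℝ)) *
            ∑ i,
              ((Real.log (κ θ₀ (cs i) astar) -
                    (1 / ((n : ℝ) - 1)) *
                      ∑ j ∈ Finset.univ.erase i, Real.log (κ θ₀ (cs j) astar)) *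
                  deriv (fun θ => Real.log (π θ (cs i))) θ₀ +
                deriv (fun θ => Real.log (κ θ (cs i) astar)) θ₀)) =
      ∑ c, π θ₀ c *
        (Real.log (κ θ₀ c astar) * deriv (fun θ => Real.log (π θ c)) θ₀ +
          deriv (fun θ => Real.log (κ θ c astar)) θ₀) :=
  leave_one_out_control_variate_unbiased_general θ₀ astar π κ hπ1 hπpos hπdiff n hn
end
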